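/- arXiv:2504.21623 — 6 statements merged into one kernel-verified Lean document; each statement's English description precedes it below -/
import Mathlib

section
/- Let Ω ⊆ ℝ^N be a nonempty open set of finite Lebesgue measure, let 1 ≤ p < ∞, and let f : Ω → ℝ^m be measurable. Then f ∈ L^p(Ω; ℝ^m) if and only if the function f̃(x,y) := f(y) − f(x) belongs to L^p(Ω × Ω; ℝ^m). -/
open MeasureTheory Set
open scoped ENNReal NNReal

/-! If `f ∈ L^p(μ)` with `μ` finite, both `(x, y) ↦ f y` and `(x, y) ↦ f x` lie in `L^p(μ ⊗ μ)`.
Conversely, by Fubini almost every section `y ↦ f y - f x₀` of the difference lies in `L^p(μ)`,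
and `f` differs from such a section by a constant. -/

namespace MeasureTheory

variable {α β E : Type*} {mα : MeasurableSpace α} {mβ : MeasurableSpace β}
  [NormedAddCommGroup E] {μ : Measure α} {ν : Measure β} {p : ℝ≥0∞}

theorem MemLp.prod_right_ae [SFinite μ] [SFinite ν] {g : α × β → E}
    (hg : MemLp g p (μ.prod ν)) : ∀ᵐ x ∂μ, MemLp (fun y ↦ g (x, y)) p ν := by
  rcases eq_or_ne p 0 with rfl | hp0
  · simpa only [memLp_zero_iff_aestronglyMeasurable] using hg.1.prodMk_left
  rcases eq_or_ne p ∞ with rfl | hp_top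
  · have hg_lt : eLpNormEssSup g (μ.prod ν) < ∞ := by simpa only [eLpNorm_exponent_top] using hg.2
    have hg_bound := Measure.ae_ae_of_ae_prod (ae_le_eLpNormEssSup (f := g) (μ := μ.prod ν))
    filter_upwards [hg_bound, hg.1.prodMk_left] with x hx_bound hx_meas
    refine ⟨hx_meas, ?_⟩
    rw [eLpNorm_exponent_top]
    exact (eLpNormEssSup_le_of_ae_enorm_bound hx_bound).trans_lt hg_lt
  · have hint := ((integrable_norm_rpow_iff hg.1 hp0 hp_top).mpr hg).prod_right_ae
    filter_upwards [hint, hg.1.prodMk_left] with x hx_int hx_meas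
    exact (integrable_norm_rpow_iff hx_meas hp0 hp_top).mp hx_int

theorem memLp_iff_memLp_sub_prod [IsFiniteMeasure μ] {f : α → E} :
    MemLp f p μ ↔ MemLp (fun z : α × α ↦ f z.2 - f z.1) p (μ.prod μ) := by
  refine ⟨fun hf ↦ (hf.comp_snd μ).sub (hf.comp_fst μ), fun h ↦ ?_⟩
  rcases eq_zero_or_neZero μ with rfl | _
  · exact memLp_measure_zero
  obtain ⟨x₀, hx₀⟩ := h.prod_right_ae.exists
  simpa only [Pi.add_def, sub_add_cancel] using hx₀.add (memLp_const (f x₀))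

end MeasureTheory

theorem statement0_general (N m : ℕ) (Ω : Set (EuclideanSpace ℝ (Fin N)))
    (hΩ_fin : volume Ω < ⊤)
    (p : ℝ≥0∞)
    (f : EuclideanSpace ℝ (Fin N) → EuclideanSpace ℝ (Fin m)) :
    MemLp f p (volume.restrict Ω) ↔
      MemLp (fun z : EuclideanSpace ℝ (Fin N) × EuclideanSpace ℝ (Fin N) => f z.2 - f z.1) p
        ((volume.restrict Ω).prod (volume.restrict Ω)) :=
  have : IsFiniteMeasure (volume.restrict Ω) := isFiniteMeasure_restrict.mpr hΩ_fin.ne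
  memLp_iff_memLp_sub_prod

/-- For a nonempty open set `Ω ⊆ ℝ^N` of finite measure, `1 ≤ p < ∞`, and a
measurable `f : Ω → ℝ^m`, `f ∈ L^p(Ω)` iff `(x,y) ↦ f y - f x` belongs to `L^p(Ω × Ω)`. -/
theorem statement0 (N m : ℕ) (Ω : Set (EuclideanSpace ℝ (Fin N)))
    (hΩ_open : IsOpen Ω) (hΩ_ne : Ω.Nonempty) (hΩ_fin : volume Ω < ⊤)
    (p : ℝ≥0∞) (hp1 : 1 ≤ p) (hp_top : p ≠ ⊤)
    (f : EuclideanSpace ℝ (Fin N) → EuclideanSpace ℝ (Fin m)) (hf : Measurable f) :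
    MemLp f p (volume.restrict Ω) ↔
      MemLp (fun z : EuclideanSpace ℝ (Fin N) × EuclideanSpace ℝ (Fin N) => f z.2 - f z.1) p
        ((volume.restrict Ω).prod (volume.restrict Ω)) :=
  statement0_general N m Ω hΩ_fin p f
end

section
/- Let Ω ⊆ ℝ^N be a nonempty open set of infinite Lebesgue measure, 1 ≤ p < ∞, c > 0, and let g : Ω × Ω → ℝ be measurable with g(x,y) ≥ c for almost every (x,y). Let f : Ω → ℝ^m be measurable and not almost everywhere equal to a constant. Then ∫_Ω ∫_Ω g(x,y) |f(y) − f(x)|^p dx dy = +∞. -/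
open MeasureTheory Set
open scoped ENNReal NNReal

/-!
If `∫∫ g(x,y) |f(y) - f(x)|^p` were finite, so would be `∫∫ |f(y) - f(x)|^p`, since `g ≥ c > 0`.
By Tonelli, `F(x) = ∫ |f(y) - f(x)|^p dy` is then finite for almost every `x`. For two such
points `x, x₀`, integrating `|f(x) - f(x₀)|^p ≤ 2^p (|f(y) - f(x)|^p + |f(y) - f(x₀)|^p)` over `y`
bounds `|f(x) - f(x₀)|^p` times the (infinite) measure of the space by `2^p (F(x) + F(x₀)) < ∞`,
so `f(x) = f(x₀)`: `f` is almost everywhere constant.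
-/

section

variable {α E : Type*} [MeasurableSpace α] {μ : Measure α}
  [EMetricSpace E] [MeasurableSpace E] [BorelSpace E]
  {f : α → E} {p : ℝ}

lemma eq_of_lintegral_edist_rpow_ne_top (hμ : μ univ = ∞) (hp : 0 < p) (hf : Measurable f)
    {x x₀ : α} (hx : ∫⁻ y, edist (f y) (f x) ^ p ∂μ ≠ ∞)
    (hx₀ : ∫⁻ y, edist (f y) (f x₀) ^ p ∂μ ≠ ∞) : f x = f x₀ := by
  have hle : edist (f x) (f x₀) ^ p * μ univ ≤
      2 ^ p * (∫⁻ y, edist (f y) (f x) ^ p ∂μ + ∫⁻ y, edist (f y) (f x₀) ^ p ∂μ) := calc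
    _ = ∫⁻ _, edist (f x) (f x₀) ^ p ∂μ := (lintegral_const _).symm
    _ ≤ ∫⁻ y, 2 ^ p * (edist (f y) (f x) ^ p + edist (f y) (f x₀) ^ p) ∂μ :=
      lintegral_mono fun y => (ENNReal.rpow_le_rpow (edist_triangle_left _ _ (f y)) hp.le).trans
        (ENNReal.add_rpow_le_two_rpow_mul_rpow_add_rpow _ _ hp.le)
    _ = _ := by
      rw [lintegral_const_mul' _ _ (by finiteness), lintegral_add_left (by fun_prop)]
  have hzero : edist (f x) (f x₀) ^ p = 0 := by
    by_contra hne
    rw [hμ, ENNReal.mul_top hne, top_le_iff] at hle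
    exact ENNReal.mul_ne_top (by finiteness) (ENNReal.add_ne_top.2 ⟨hx, hx₀⟩) hle
  rwa [ENNReal.rpow_eq_zero_iff_of_pos hp, edist_eq_zero] at hzero

lemma lintegral_prod_edist_rpow_eq_top [SecondCountableTopology E] [SFinite μ]
    (hμ : μ univ = ∞) (hp : 0 < p) (hf : Measurable f) (hnc : ¬ ∃ v, f =ᵐ[μ] fun _ => v) :
    ∫⁻ z, edist (f z.2) (f z.1) ^ p ∂μ.prod μ = ∞ := by
  have hmeas : Measurable fun z : α × α => edist (f z.2) (f z.1) ^ p := by fun_prop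
  by_contra hfin
  rw [lintegral_prod _ hmeas.aemeasurable] at hfin
  have hae : ∀ᵐ x ∂μ, ∫⁻ y, edist (f y) (f x) ^ p ∂μ < ∞ :=
    ae_lt_top hmeas.lintegral_prod_right' hfin
  have : (ae μ).NeBot := ae_neBot.2 fun h => by simp [h] at hμ
  obtain ⟨x₀, hx₀⟩ := hae.exists
  exact hnc ⟨f x₀, hae.mono fun x hx => eq_of_lintegral_edist_rpow_ne_top hμ hp hf hx.ne hx₀.ne⟩

end

theorem statement3_general (N m : ℕ) (Ω : Set (EuclideanSpace ℝ (Fin N)))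
    (hΩ_inf : volume Ω = ⊤)
    (p : ℝ) (hp1 : 1 ≤ p) (c : ℝ) (hc : 0 < c)
    (g : EuclideanSpace ℝ (Fin N) × EuclideanSpace ℝ (Fin N) → ℝ)
    (hg_lb : ∀ᵐ z ∂((volume.restrict Ω).prod (volume.restrict Ω)), c ≤ g z)
    (f : EuclideanSpace ℝ (Fin N) → EuclideanSpace ℝ (Fin m)) (hf : Measurable f)
    (hf_nc : ¬ ∃ v : EuclideanSpace ℝ (Fin m), f =ᵐ[volume.restrict Ω] fun _ => v) :
    ∫⁻ z,
        ENNReal.ofReal (g z) * (‖f z.2 - f z.1‖₊ : ℝ≥0∞) ^ p ∂((volume.restrict Ω).prod (volume.restrict Ω)) = ⊤ := by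
  have hdiff := lintegral_prod_edist_rpow_eq_top (p := p) (by rwa [Measure.restrict_apply_univ])
    (by linarith) hf hf_nc
  rw [eq_top_iff, ← ENNReal.mul_top (ENNReal.ofReal_pos.2 hc).ne', ← hdiff,
    ← lintegral_const_mul' _ _ ENNReal.ofReal_ne_top]
  refine lintegral_mono_ae ?_
  filter_upwards [hg_lb] with z hz
  rw [edist_eq_enorm_sub, enorm_eq_nnnorm]
  gcongr

/-- If `Ω ⊆ ℝ^N` is nonempty open of infinite measure, `1 ≤ p < ∞`, `g` is
measurable with `g ≥ c > 0` a.e. on `Ω × Ω`, and `f` is measurable and not a.e. constant,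
then `∫_Ω ∫_Ω g(x,y) |f(y) − f(x)|^p dx dy = +∞`. -/
theorem statement3 (N m : ℕ) (Ω : Set (EuclideanSpace ℝ (Fin N)))
    (hΩ_open : IsOpen Ω) (hΩ_ne : Ω.Nonempty) (hΩ_inf : volume Ω = ⊤)
    (p : ℝ) (hp1 : 1 ≤ p) (c : ℝ) (hc : 0 < c)
    (g : EuclideanSpace ℝ (Fin N) × EuclideanSpace ℝ (Fin N) → ℝ)
    (hg_meas : Measurable g)
    (hg_lb : ∀ᵐ z ∂((volume.restrict Ω).prod (volume.restrict Ω)), c ≤ g z)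
    (f : EuclideanSpace ℝ (Fin N) → EuclideanSpace ℝ (Fin m)) (hf : Measurable f)
    (hf_nc : ¬ ∃ v : EuclideanSpace ℝ (Fin m), f =ᵐ[volume.restrict Ω] fun _ => v) :
    ∫⁻ z,
        ENNReal.ofReal (g z) * (‖f z.2 - f z.1‖₊ : ℝ≥0∞) ^ p ∂((volume.restrict Ω).prod (volume.restrict Ω)) = ⊤ :=
  statement3_general N m Ω hΩ_inf p hp1 c hc g hg_lb f hf hf_nc
end

section
/- Let Ω ⊆ ℝ^N be of infinite measure and f : Ω → ℝ^m measurable and not a.e. constant. Then there exist measurable sets U, V ⊆ Ω with |U| = ∞ and |V| > 0, and δ > 0, such that |f(y) − f(x)| ≥ δ for almost every (x,y) ∈ U × V. -/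
open MeasureTheory Set
open scoped ENNReal NNReal

lemma st4_aux {X : Type*} [MeasurableSpace X] {μ : Measure X} [SFinite μ]
    {U V : Set X} (hU : MeasurableSet U) (hV : MeasurableSet V)
    {P : X × X → Prop} (h : ∀ x ∈ U, ∀ y ∈ V, P (x, y)) :
    ∀ᵐ z ∂((μ.restrict U).prod (μ.restrict V)), P z := by
  rw [Measure.prod_restrict]
  exact ae_restrict_of_forall_mem (hU.prod hV) fun z hz => h z.1 hz.1 z.2 hz.2

/-- If `Ω ⊆ ℝ^N` has infinite measure and `f` is measurable and not a.e.
constant, then there are measurable sets `U, V ⊆ Ω` with `|U| = ∞`, `|V| > 0`, and `δ > 0`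
such that `|f(y) − f(x)| ≥ δ` for almost every `(x,y) ∈ U × V`. -/
theorem statement4 (N m : ℕ) (Ω : Set (EuclideanSpace ℝ (Fin N)))
    (hΩ_open : IsOpen Ω) (hΩ_ne : Ω.Nonempty) (hΩ_inf : volume Ω = ⊤)
    (f : EuclideanSpace ℝ (Fin N) → EuclideanSpace ℝ (Fin m)) (hf : Measurable f)
    (hf_nc : ¬ ∃ v : EuclideanSpace ℝ (Fin m), f =ᵐ[volume.restrict Ω] fun _ => v) :
    ∃ (U V : Set (EuclideanSpace ℝ (Fin N))) (δ : ℝ), 0 < δ ∧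
      U ⊆ Ω ∧ V ⊆ Ω ∧ MeasurableSet U ∧ MeasurableSet V ∧
      volume U = ⊤ ∧ 0 < volume V ∧
      ∀ᵐ z ∂((volume.restrict U).prod (volume.restrict V)), δ ≤ ‖f z.2 - f z.1‖ := by
  have hΩm : MeasurableSet Ω := hΩ_open.measurableSet
  set μ := volume.restrict Ω with hμ
  have hfreq : ∀ b : EuclideanSpace ℝ (Fin m), ∃ᵐ x ∂μ, f x ≠ b := by
    intro b
    by_contra h
    rw [Filter.not_frequently] at h
    simp only [not_ne_iff] at h
    exact hf_nc ⟨b, h⟩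
  obtain ⟨a, b, hab, ha, hb⟩ := exists_ne_forall_mem_nhds_pos_measure_preimage hfreq
  -- translate: for any ball around a or b, the preimage within Ω has positive measure
  have key : ∀ (c : EuclideanSpace ℝ (Fin m)), (∀ t ∈ nhds c, 0 < μ (f ⁻¹' t)) →
      ∀ s : ℝ, 0 < s → 0 < volume (f ⁻¹' (Metric.ball c s) ∩ Ω) := by
    intro c hc s hs
    have := hc (Metric.ball c s) (Metric.ball_mem_nhds c hs)
    rwa [hμ, Measure.restrict_apply (hf measurableSet_ball)] at this
  have hind : ∀ (A : Set (EuclideanSpace ℝ (Fin m))), MeasurableSet A →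
      MeasurableSet (f ⁻¹' A ∩ Ω) := fun A hA => (hf hA).inter hΩm
  by_cases hcase : ∃ c : EuclideanSpace ℝ (Fin m), ∀ s : ℝ, 0 < s →
      volume (f ⁻¹' (Metric.ball c s) ∩ Ω) = ⊤
  · -- Case A: some point has infinite-measure preimages of all its balls
    obtain ⟨c, hc⟩ := hcase
    set d := dist a b with hd
    have hd0 : 0 < d := dist_pos.2 hab
    -- pick e ∈ {a, b} “far” (≥ d/2) from c, with all ball preimages of positive measure
    obtain ⟨e, he_pos, he_far⟩ :
        ∃ e, (∀ s : ℝ, 0 < s → 0 < volume (f ⁻¹' (Metric.ball e s) ∩ Ω)) ∧ d / 2 ≤ dist e c := by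
      by_cases hca : d / 2 ≤ dist a c
      · exact ⟨a, key a ha, hca⟩
      · refine ⟨b, key b hb, ?_⟩
        push_neg at hca
        have := dist_triangle a c b
        rw [dist_comm c b] at this
        linarith [hd ▸ this]
    refine ⟨f ⁻¹' (Metric.ball c (d / 8)) ∩ Ω, f ⁻¹' (Metric.ball e (d / 8)) ∩ Ω, d / 4,
      by linarith, inter_subset_right, inter_subset_right,
      hind _ measurableSet_ball, hind _ measurableSet_ball,
      hc _ (by linarith), he_pos _ (by linarith), ?_⟩
    apply st4_aux (hind _ measurableSet_ball) (hind _ measurableSet_ball)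
    rintro x ⟨hx, -⟩ y ⟨hy, -⟩
    simp only [mem_preimage, Metric.mem_ball] at hx hy
    have h1 := dist_triangle4 e (f y) (f x) c
    rw [dist_comm e (f y)] at h1
    have : d / 4 ≤ dist (f y) (f x) := by linarith
    simpa [dist_eq_norm] using this
  · -- Case B: every point (in particular a) has a ball with finite-measure preimage
    push_neg at hcase
    obtain ⟨s, hs0, hsfin⟩ := hcase a
    set U := f ⁻¹' (Metric.ball a (s / 2))ᶜ ∩ Ω with hU
    have hUm : MeasurableSet U := hind _ measurableSet_ball.compl
    have hUtop : volume U = ⊤ := by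
      by_contra hUfin
      have hsplit : Ω ⊆ U ∪ (f ⁻¹' (Metric.ball a s) ∩ Ω) := by
        intro x hx
        by_cases hxb : f x ∈ Metric.ball a (s / 2)
        · exact Or.inr ⟨Metric.ball_subset_ball (by linarith) hxb, hx⟩
        · exact Or.inl ⟨hxb, hx⟩
      have : volume Ω ≤ volume U + volume (f ⁻¹' (Metric.ball a s) ∩ Ω) :=
        le_trans (measure_mono hsplit) (measure_union_le _ _)
      rw [hΩ_inf] at this
      exact (ENNReal.add_lt_top.2 ⟨lt_top_iff_ne_top.2 hUfin, lt_top_iff_ne_top.2 hsfin⟩).ne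
        (top_le_iff.1 this)
    refine ⟨U, f ⁻¹' (Metric.ball a (s / 4)) ∩ Ω, s / 4, by linarith,
      inter_subset_right, inter_subset_right, hUm, hind _ measurableSet_ball,
      hUtop, key a ha _ (by linarith), ?_⟩
    apply st4_aux hUm (hind _ measurableSet_ball)
    rintro x ⟨hx, -⟩ y ⟨hy, -⟩
    simp only [mem_preimage, mem_compl_iff, Metric.mem_ball, not_lt] at hx hy
    have : s / 4 ≤ dist (f y) (f x) := by
      have h2 := dist_triangle (f x) (f y) a
      rw [dist_comm (f x) (f y)] at h2
      linarith
    simpa [dist_eq_norm] using this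
end

section
/- Let Ω ⊆ ℝ^N be nonempty open of finite measure, p ∈ [1,∞), u ∈ W^{1,p}(Ω), and let θ ∈ C_c^1(Ω) with ∫_Ω θ ≠ 0. Define the affine function g_θ(x) := (−(∫_Ω θ)^{−1} ∫_Ω u(y) ∇θ(y) dy) · x. Then ∫_Ω |∇(u − g_θ)(x)|^p dx ≤ (|Ω|^{p−1} ‖θ‖_∞^p / |∫_Ω θ|^p) ∫_{Ω×Ω} |∇u(y) − ∇u(x)|^p dx dy. -/
/-!
Testing the weak gradient against `θ` (after extending the weak identity from smooth to `C¹`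
test functions by mollification) gives `∫ u ∇θ = -∫ θ G`, so the constant gradient of `g_θ` is
the `θ`-weighted average `b = (∫ θ)⁻¹ ∫ θ G` of `G`. Hence
`G x - b = (∫ θ)⁻¹ ∫ θ y • (G x - G y) dy` has norm at most `‖θ‖_∞ / |∫ θ| * ∫ ‖G y - G x‖ dy`;
Hölder's inequality on the finite measure space `Ω` and integration in `x` give the claim.
-/

open MeasureTheory Set Metric
open scoped ENNReal NNReal

/-- `G` is a weak gradient of `u` on the open set `Ω`. -/
def HasWeakGradientOn {N : ℕ} (u : EuclideanSpace ℝ (Fin N) → ℝ)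
    (G : EuclideanSpace ℝ (Fin N) → EuclideanSpace ℝ (Fin N))
    (Ω : Set (EuclideanSpace ℝ (Fin N))) : Prop :=
  LocallyIntegrableOn u Ω ∧ LocallyIntegrableOn G Ω ∧
    ∀ φ : EuclideanSpace ℝ (Fin N) → ℝ, ContDiff ℝ (⊤ : ℕ∞) φ → HasCompactSupport φ →
      tsupport φ ⊆ Ω → ∀ v : EuclideanSpace ℝ (Fin N),
        ∫ x in Ω, u x * fderiv ℝ φ x v = - ∫ x in Ω, φ x * (inner ℝ (G x) v : ℝ)

open Filter Topology
open scoped Convolution Pointwise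

theorem lintegral_rpow_le_measure_univ_rpow_mul {α : Type*} [MeasurableSpace α] (μ : Measure α)
    {f : α → ℝ≥0∞} (hf : AEMeasurable f μ) {p : ℝ} (hp : 1 ≤ p) :
    (∫⁻ a, f a ∂μ) ^ p ≤ μ univ ^ (p - 1) * ∫⁻ a, f a ^ p ∂μ := by
  rcases hp.eq_or_lt with rfl | hp
  · simp
  have hpq := Real.HolderConjugate.conjExponent hp
  have hp0 : 0 ≤ p := by linarith
  have holder : ∫⁻ a, f a ∂μ ≤ (∫⁻ a, f a ^ p ∂μ) ^ (1 / p) * μ univ ^ (1 / p.conjExponent) := by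
    simpa using ENNReal.lintegral_mul_le_Lp_mul_Lq μ hpq hf (aemeasurable_const (b := 1))
  calc (∫⁻ a, f a ∂μ) ^ p
      ≤ ((∫⁻ a, f a ^ p ∂μ) ^ (1 / p) * μ univ ^ (1 / p.conjExponent)) ^ p :=
        ENNReal.rpow_le_rpow holder hp0
    _ = μ univ ^ (p - 1) * ∫⁻ a, f a ^ p ∂μ := by
        rw [ENNReal.mul_rpow_of_nonneg _ _ hp0, ← ENNReal.rpow_mul, ← ENNReal.rpow_mul,
          one_div_mul_cancel (by positivity), one_div_mul_eq_div, hpq.div_conj_eq_sub_one,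
          ENNReal.rpow_one, mul_comm]

section WeightedAverage

variable {α E : Type*} [MeasurableSpace α] {μ : Measure α} [NormedAddCommGroup E]
  [NormedSpace ℝ E] [CompleteSpace E] {θ : α → ℝ} {G : α → E} {M : ℝ}

theorem enorm_sub_weightedAverage_le (hθ : Integrable θ μ)
    (hθG : Integrable (fun y ↦ θ y • G y) μ) (hM : ∀ y, |θ y| ≤ M) (hS : ∫ y, θ y ∂μ ≠ 0)
    (c : E) :
    ‖c - (∫ y, θ y ∂μ)⁻¹ • ∫ y, θ y • G y ∂μ‖ₑ
      ≤ ENNReal.ofReal (M / |∫ y, θ y ∂μ|) * ∫⁻ y, ‖G y - c‖ₑ ∂μ := by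
  set S := ∫ y, θ y ∂μ
  have hdiff : c - S⁻¹ • ∫ y, θ y • G y ∂μ = S⁻¹ • ∫ y, θ y • (c - G y) ∂μ := by
    simp_rw [smul_sub]
    rw [integral_sub (hθ.smul_const c) hθG, integral_smul_const, smul_sub, smul_smul,
      inv_mul_cancel₀ hS, one_smul]
  calc ‖c - S⁻¹ • ∫ y, θ y • G y ∂μ‖ₑ
      = ‖S⁻¹‖ₑ * ‖∫ y, θ y • (c - G y) ∂μ‖ₑ := by rw [hdiff, enorm_smul]
    _ ≤ ‖S⁻¹‖ₑ * ∫⁻ y, ENNReal.ofReal M * ‖G y - c‖ₑ ∂μ := by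
        gcongr
        refine (enorm_integral_le_lintegral_enorm _).trans (lintegral_mono fun y ↦ ?_)
        rw [enorm_smul, enorm_sub_rev, Real.enorm_eq_ofReal_abs]
        gcongr
        exact hM y
    _ = ENNReal.ofReal (M / |S|) * ∫⁻ y, ‖G y - c‖ₑ ∂μ := by
        rw [lintegral_const_mul' _ _ ENNReal.ofReal_ne_top, ← mul_assoc, Real.enorm_eq_ofReal_abs,
          ← ENNReal.ofReal_mul (by positivity), abs_inv, inv_mul_eq_div]

theorem lintegral_enorm_sub_weightedAverage_rpow_le [IsFiniteMeasure μ] (hθ : Integrable θ μ)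
    (hθG : Integrable (fun y ↦ θ y • G y) μ) (hG : AEStronglyMeasurable G μ)
    (hM : ∀ y, |θ y| ≤ M) (hS : ∫ y, θ y ∂μ ≠ 0) {p : ℝ} (hp : 1 ≤ p) :
    ∫⁻ x, ‖G x - (∫ y, θ y ∂μ)⁻¹ • ∫ y, θ y • G y ∂μ‖ₑ ^ p ∂μ
      ≤ ENNReal.ofReal (μ.real univ ^ (p - 1) * M ^ p / |∫ y, θ y ∂μ| ^ p) *
        ∫⁻ z, ‖G z.2 - G z.1‖ₑ ^ p ∂(μ.prod μ) := by
  set S := ∫ y, θ y ∂μ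
  have hp0 : 0 ≤ p := by linarith
  have hM0 : 0 ≤ M := by
    obtain ⟨y, -⟩ : ∃ y, θ y ≠ 0 := by
      by_contra! h
      exact hS (by simp [S, h])
    exact (abs_nonneg _).trans (hM y)
  have hconst : ENNReal.ofReal (M / |S|) ^ p * μ univ ^ (p - 1)
      = ENNReal.ofReal (μ.real univ ^ (p - 1) * M ^ p / |S| ^ p) := by
    have hμ : μ univ ^ (p - 1) = ENNReal.ofReal (μ.real univ ^ (p - 1)) := by
      rw [← ENNReal.ofReal_rpow_of_nonneg measureReal_nonneg (by linarith), ofReal_measureReal]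
    rw [hμ, ENNReal.ofReal_rpow_of_nonneg (by positivity) hp0, ← ENNReal.ofReal_mul (by positivity),
      Real.div_rpow hM0 (abs_nonneg _)]
    congr 1
    ring
  have hpointwise : ∀ x, ‖G x - S⁻¹ • ∫ y, θ y • G y ∂μ‖ₑ ^ p
      ≤ ENNReal.ofReal (μ.real univ ^ (p - 1) * M ^ p / |S| ^ p) *
        ∫⁻ y, ‖G y - G x‖ₑ ^ p ∂μ := fun x ↦
    calc ‖G x - S⁻¹ • ∫ y, θ y • G y ∂μ‖ₑ ^ p
        ≤ (ENNReal.ofReal (M / |S|) * ∫⁻ y, ‖G y - G x‖ₑ ∂μ) ^ p :=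
          ENNReal.rpow_le_rpow (enorm_sub_weightedAverage_le hθ hθG hM hS (G x)) hp0
      _ ≤ ENNReal.ofReal (M / |S|) ^ p * (μ univ ^ (p - 1) * ∫⁻ y, ‖G y - G x‖ₑ ^ p ∂μ) := by
          rw [ENNReal.mul_rpow_of_nonneg _ _ hp0]
          gcongr
          exact lintegral_rpow_le_measure_univ_rpow_mul μ
            (hG.sub aestronglyMeasurable_const).enorm hp
      _ = _ := by rw [← mul_assoc, hconst]
  calc ∫⁻ x, ‖G x - S⁻¹ • ∫ y, θ y • G y ∂μ‖ₑ ^ p ∂μ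
      ≤ ∫⁻ x, ENNReal.ofReal (μ.real univ ^ (p - 1) * M ^ p / |S| ^ p) *
          ∫⁻ y, ‖G y - G x‖ₑ ^ p ∂μ ∂μ := lintegral_mono hpointwise
    _ = _ := by
        rw [lintegral_const_mul' _ _ ENNReal.ofReal_ne_top,
          lintegral_prod (fun z ↦ ‖G z.2 - G z.1‖ₑ ^ p)
            ((hG.comp_snd.sub hG.comp_fst).enorm.pow_const p)]

end WeightedAverage

section LocallyIntegrableOn

variable {X E 𝕜 : Type*} [TopologicalSpace X] [T2Space X] [MeasurableSpace X]
  [OpensMeasurableSpace X] {μ : Measure X} [NormedAddCommGroup E] [NormedRing 𝕜] [Module 𝕜 E]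
  [IsBoundedSMul 𝕜 E] {Ω : Set X}

theorem MeasureTheory.LocallyIntegrableOn.integrable_smul_left_of_tsupport_subset {f : X → E}
    (hf : LocallyIntegrableOn f Ω μ) {g : X → 𝕜} (hg : Continuous g) (hgc : HasCompactSupport g)
    (hgΩ : tsupport g ⊆ Ω) : Integrable (fun x ↦ g x • f x) (μ.restrict Ω) := by
  have hfK : Integrable ((tsupport g).indicator f) μ :=
    (hf.integrableOn_compact_subset hgΩ hgc).integrable_indicator
      (isClosed_tsupport g).measurableSet
  refine (hfK.locallyIntegrable.integrable_smul_left_of_hasCompactSupport hg hgc).restrict.congr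
    (ae_of_all _ fun x ↦ ?_)
  by_cases hx : x ∈ tsupport g
  · simp [hx]
  · simp [image_eq_zero_of_notMem_tsupport hx]

theorem MeasureTheory.LocallyIntegrableOn.integrable_smul_right_of_tsupport_subset {f : X → 𝕜}
    (hf : LocallyIntegrableOn f Ω μ) {g : X → E} (hg : Continuous g) (hgc : HasCompactSupport g)
    (hgΩ : tsupport g ⊆ Ω) : Integrable (fun x ↦ f x • g x) (μ.restrict Ω) := by
  have hfK : Integrable ((tsupport g).indicator f) μ :=
    (hf.integrableOn_compact_subset hgΩ hgc).integrable_indicator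
      (isClosed_tsupport g).measurableSet
  refine (hfK.locallyIntegrable.integrable_smul_right_of_hasCompactSupport hg hgc).restrict.congr
    (ae_of_all _ fun x ↦ ?_)
  by_cases hx : x ∈ tsupport g
  · simp [hx]
  · simp [image_eq_zero_of_notMem_tsupport hx]

end LocallyIntegrableOn

theorem tendsto_setIntegral_mul_of_dominated {α ι : Type*} [MeasurableSpace α] {μ : Measure α}
    {l : Filter ι} [l.IsCountablyGenerated] {s K : Set α} (hK : MeasurableSet K) {f : α → ℝ}
    (hf : AEStronglyMeasurable f (μ.restrict s)) (hfK : IntegrableOn f K μ)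
    {g : ι → α → ℝ} {g₀ : α → ℝ} {C : ℝ}
    (hg : ∀ i, AEStronglyMeasurable (g i) (μ.restrict s)) (hgC : ∀ i x, |g i x| ≤ C)
    (hgK : ∀ i, ∀ x ∉ K, g i x = 0) (hg₀ : ∀ x, Tendsto (g · x) l (𝓝 (g₀ x))) :
    Tendsto (fun i ↦ ∫ x in s, f x * g i x ∂μ) l (𝓝 (∫ x in s, f x * g₀ x ∂μ)) := by
  refine tendsto_integral_filter_of_dominated_convergence (K.indicator fun x ↦ C * |f x|)
    (Eventually.of_forall fun i ↦ hf.mul (hg i))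
    (Eventually.of_forall fun i ↦ ae_of_all _ fun x ↦ ?_)
    (IntegrableOn.integrable_indicator (hfK.abs.const_mul C) hK).restrict
    (ae_of_all _ fun x ↦ (hg₀ x).const_mul (f x))
  by_cases hx : x ∈ K
  · rw [indicator_of_mem hx, Real.norm_eq_abs, abs_mul, mul_comm]
    exact mul_le_mul_of_nonneg_right (hgC i x) (abs_nonneg _)
  · simp [hgK i x hx, indicator_of_notMem hx]

theorem ContDiffBump.exists_seq_rOut_le_tendsto_zero {E : Type*} [NormedAddCommGroup E] {δ : ℝ}
    (hδ : 0 < δ) :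
    ∃ ρ : ℕ → ContDiffBump (0 : E), (∀ n, (ρ n).rOut ≤ δ) ∧
      Tendsto (fun n ↦ (ρ n).rOut) atTop (𝓝 0) := by
  refine ⟨fun n ↦ ⟨δ / (n + 1) / 2, δ / (n + 1), half_pos (by positivity),
    half_lt_self (by positivity)⟩, fun n ↦ div_le_self hδ.le (by simp), ?_⟩
  simpa [div_eq_mul_inv] using tendsto_one_div_add_atTop_nhds_zero_nat.const_mul δ

section Mollification

variable {E : Type*} [NormedAddCommGroup E] [NormedSpace ℝ E] [FiniteDimensional ℝ E]
  [MeasurableSpace E] [BorelSpace E] {μ : Measure E} [μ.IsAddHaarMeasure]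
  (φ : ContDiffBump (0 : E)) {θ : E → ℝ}

theorem ContDiffBump.abs_normed_convolution_le (hθ : Continuous θ) {C : ℝ}
    (hC : ∀ y, |θ y| ≤ C) (x : E) :
    |(φ.normed μ ⋆[ContinuousLinearMap.lsmul ℝ ℝ, μ] θ) x| ≤ C := by
  simpa [Real.dist_eq] using dist_convolution_le (z₀ := 0) ((abs_nonneg _).trans (hC 0))
    φ.support_normed_eq.subset φ.nonneg_normed φ.integral_normed hθ.aestronglyMeasurable
    fun y _ ↦ by simpa [Real.dist_eq] using hC y

theorem ContDiffBump.tsupport_normed_convolution_subset :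
    tsupport (φ.normed μ ⋆[ContinuousLinearMap.lsmul ℝ ℝ, μ] θ)
      ⊆ cthickening φ.rOut (tsupport θ) := by
  refine closure_minimal ((support_convolution_subset _).trans ?_) isClosed_cthickening
  rw [φ.support_normed_eq]
  calc ball (0 : E) φ.rOut + Function.support θ ⊆ ball (0 : E) φ.rOut + tsupport θ :=
        add_subset_add_left (subset_tsupport θ)
    _ = thickening φ.rOut (tsupport θ) := ball_add_zero _ _
    _ ⊆ cthickening φ.rOut (tsupport θ) := thickening_subset_cthickening _ _

theorem ContDiffBump.fderiv_normed_convolution_apply (hθ : ContDiff ℝ 1 θ)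
    (hθc : HasCompactSupport θ) (x v : E) :
    fderiv ℝ (φ.normed μ ⋆[ContinuousLinearMap.lsmul ℝ ℝ, μ] θ) x v
      = (φ.normed μ ⋆[ContinuousLinearMap.lsmul ℝ ℝ, μ] fun a ↦ fderiv ℝ θ a v) x := by
  have hφ : LocallyIntegrable (φ.normed μ) μ := φ.integrable_normed.locallyIntegrable
  rw [(hθc.hasFDerivAt_convolution_right (𝕜 := ℝ) _ hφ hθ x).fderiv]
  exact convolution_precompR_apply _ hφ (hθc.fderiv (𝕜 := ℝ))
    (hθ.continuous_fderiv one_ne_zero) x v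

theorem ContDiffBump.abs_fderiv_normed_convolution_apply_le (hθ : ContDiff ℝ 1 θ)
    (hθc : HasCompactSupport θ) {C : ℝ} (hC : ∀ y, ‖fderiv ℝ θ y‖ ≤ C) (x v : E) :
    |fderiv ℝ (φ.normed μ ⋆[ContinuousLinearMap.lsmul ℝ ℝ, μ] θ) x v| ≤ C * ‖v‖ := by
  rw [φ.fderiv_normed_convolution_apply hθ hθc]
  exact φ.abs_normed_convolution_le ((hθ.continuous_fderiv one_ne_zero).clm_apply continuous_const)
    (fun y ↦ ((fderiv ℝ θ y).le_opNorm v).trans (by gcongr; exact hC y)) x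

end Mollification

namespace HasWeakGradientOn

variable {N : ℕ} {u : EuclideanSpace ℝ (Fin N) → ℝ}
  {G : EuclideanSpace ℝ (Fin N) → EuclideanSpace ℝ (Fin N)} {Ω : Set (EuclideanSpace ℝ (Fin N))}
  {θ : EuclideanSpace ℝ (Fin N) → ℝ}

theorem integral_mul_fderiv_of_contDiff_one (hG : HasWeakGradientOn u G Ω) (hΩ : IsOpen Ω)
    (hθ : ContDiff ℝ 1 θ) (hθc : HasCompactSupport θ) (hθΩ : tsupport θ ⊆ Ω)
    (v : EuclideanSpace ℝ (Fin N)) :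
    ∫ x in Ω, u x * fderiv ℝ θ x v = - ∫ x in Ω, θ x * (inner ℝ (G x) v : ℝ) := by
  -- Mollifying at radii `≤ δ` keeps all approximants supported in the compact `K ⊆ Ω`, on which
  -- `u` and `G` are integrable; this is what makes dominated convergence applicable.
  obtain ⟨δ, hδ, hKΩ⟩ := hθc.exists_cthickening_subset_open hΩ hθΩ
  set K := cthickening δ (tsupport θ)
  have hKc : IsCompact K := hθc.cthickening
  obtain ⟨ρ, hρδ, hρ⟩ :=
    ContDiffBump.exists_seq_rOut_le_tendsto_zero (E := EuclideanSpace ℝ (Fin N)) hδ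
  let θn : ℕ → EuclideanSpace ℝ (Fin N) → ℝ := fun n ↦
    (ρ n).normed volume ⋆[ContinuousLinearMap.lsmul ℝ ℝ] θ
  have hθn_smooth : ∀ n, ContDiff ℝ (⊤ : ℕ∞) (θn n) := fun n ↦
    (ρ n).hasCompactSupport_normed.contDiff_convolution_left _ (ρ n).contDiff_normed
      (hθ.continuous.locallyIntegrable)
  have hθn_supp : ∀ n, tsupport (θn n) ⊆ K := fun n ↦
    (ρ n).tsupport_normed_convolution_subset.trans (cthickening_mono (hρδ n) _)
  obtain ⟨M, hM⟩ := hθc.exists_bound_of_continuous hθ.continuous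
  obtain ⟨M', hM'⟩ := (hθc.fderiv (𝕜 := ℝ)).exists_bound_of_continuous
    (hθ.continuous_fderiv one_ne_zero)
  have hθv : Continuous fun a ↦ fderiv ℝ θ a v :=
    (hθ.continuous_fderiv one_ne_zero).clm_apply continuous_const
  have hlhs : Tendsto (fun n ↦ ∫ x in Ω, u x * fderiv ℝ (θn n) x v) atTop
      (𝓝 (∫ x in Ω, u x * fderiv ℝ θ x v)) := by
    refine tendsto_setIntegral_mul_of_dominated (C := M' * ‖v‖) hKc.measurableSet
      hG.1.aestronglyMeasurable (hG.1.integrableOn_compact_subset hKΩ hKc)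
      (fun n ↦ (((hθn_smooth n).continuous_fderiv (by simp)).clm_apply
        continuous_const).aestronglyMeasurable)
      (fun n x ↦ (ρ n).abs_fderiv_normed_convolution_apply_le hθ hθc hM' x v)
      (fun n x hx ↦ ?_) (fun x ↦ ?_)
    · rw [Function.notMem_support.mp fun h ↦ hx (hθn_supp n (support_fderiv_subset ℝ h)),
        zero_apply]
    · exact (ContDiffBump.convolution_tendsto_right_of_continuous hρ hθv x).congr
        fun n ↦ ((ρ n).fderiv_normed_convolution_apply hθ hθc x v).symm
  have hrhs : Tendsto (fun n ↦ ∫ x in Ω, (inner ℝ (G x) v : ℝ) * θn n x) atTop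
      (𝓝 (∫ x in Ω, (inner ℝ (G x) v : ℝ) * θ x)) :=
    tendsto_setIntegral_mul_of_dominated hKc.measurableSet
      (hG.2.1.aestronglyMeasurable.inner aestronglyMeasurable_const)
      ((hG.2.1.integrableOn_compact_subset hKΩ hKc).inner_const v)
      (fun n ↦ (hθn_smooth n).continuous.aestronglyMeasurable)
      (fun n ↦ (ρ n).abs_normed_convolution_le hθ.continuous hM)
      (fun n x hx ↦ image_eq_zero_of_notMem_tsupport fun h ↦ hx (hθn_supp n h))
      (fun x ↦ ContDiffBump.convolution_tendsto_right_of_continuous (μ := volume) hρ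
        hθ.continuous x)
  have hweak : ∀ n, ∫ x in Ω, u x * fderiv ℝ (θn n) x v
      = - ∫ x in Ω, (inner ℝ (G x) v : ℝ) * θn n x := fun n ↦ by
    simpa only [mul_comm (θn n _)] using hG.2.2 (θn n) (hθn_smooth n)
      ((ρ n).hasCompactSupport_normed.convolution _ hθc) ((hθn_supp n).trans hKΩ) v
  simp_rw [mul_comm (θ _)]
  exact tendsto_nhds_unique hlhs (hrhs.neg.congr fun n ↦ (hweak n).symm)

theorem integral_smul_gradient_eq (hG : HasWeakGradientOn u G Ω) (hΩ : IsOpen Ω)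
    (hθ : ContDiff ℝ 1 θ) (hθc : HasCompactSupport θ) (hθΩ : tsupport θ ⊆ Ω) :
    ∫ y in Ω, u y • gradient θ y = - ∫ y in Ω, θ y • G y := by
  have hgrad : Continuous (gradient θ) :=
    (InnerProductSpace.toDual ℝ _).symm.continuous.comp (hθ.continuous_fderiv one_ne_zero)
  have hgradc : HasCompactSupport (gradient θ) :=
    (hθc.fderiv (𝕜 := ℝ)).comp_left (map_zero _)
  have hgradΩ : tsupport (gradient θ) ⊆ Ω :=
    ((tsupport_comp_subset (map_zero _) _).trans (tsupport_fderiv_subset ℝ)).trans hθΩ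
  have inner_integral : ∀ f : EuclideanSpace ℝ (Fin N) → EuclideanSpace ℝ (Fin N),
      Integrable f (volume.restrict Ω) → ∀ w,
        (inner ℝ (∫ y in Ω, f y) w : ℝ) = ∫ y in Ω, (inner ℝ (f y) w : ℝ) := fun f hf w ↦ by
    rw [real_inner_comm, ← integral_inner hf]
    simp_rw [real_inner_comm]
  refine ext_inner_right ℝ fun w ↦ ?_
  rw [inner_neg_left,
    inner_integral _ (hG.1.integrable_smul_right_of_tsupport_subset hgrad hgradc hgradΩ),
    inner_integral _ (hG.2.1.integrable_smul_left_of_tsupport_subset hθ.continuous hθc hθΩ)]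
  simp_rw [real_inner_smul_left, gradient, InnerProductSpace.toDual_symm_apply]
  exact hG.integral_mul_fderiv_of_contDiff_one hΩ hθ hθc hθΩ w

end HasWeakGradientOn

theorem statement13_general (N : ℕ) (Ω : Set (EuclideanSpace ℝ (Fin N)))
    (hΩ_open : IsOpen Ω) (hΩ_fin : volume Ω < ⊤)
    (p : ℝ) (hp1 : 1 ≤ p)
    (u : EuclideanSpace ℝ (Fin N) → ℝ)
    (G : EuclideanSpace ℝ (Fin N) → EuclideanSpace ℝ (Fin N))
    (hG : HasWeakGradientOn u G Ω)
    (θ : EuclideanSpace ℝ (Fin N) → ℝ)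
    (hθ_smooth : ContDiff ℝ 1 θ) (hθ_cpt : HasCompactSupport θ) (hθ_supp : tsupport θ ⊆ Ω)
    (hθ_int : ∫ z in Ω, θ z ≠ 0) :
    ∫⁻ x in Ω,
        (‖G x - (-(∫ z in Ω, θ z)⁻¹) • (∫ y in Ω, u y • gradient θ y)‖₊ : ℝ≥0∞) ^ p
      ≤ ENNReal.ofReal
          ((volume Ω).toReal ^ (p - 1) * (⨆ x, |θ x|) ^ p / |∫ z in Ω, θ z| ^ p) *
        ∫⁻ z, (‖G z.2 - G z.1‖₊ : ℝ≥0∞) ^ p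
          ∂((volume.restrict Ω).prod (volume.restrict Ω)) := by
  have : IsFiniteMeasure (volume.restrict Ω) := isFiniteMeasure_restrict.2 hΩ_fin.ne
  have hθ_bdd : ∀ y, |θ y| ≤ ⨆ x, |θ x| :=
    le_ciSup (hθ_smooth.continuous.abs.bddAbove_range_of_hasCompactSupport hθ_cpt.abs)
  rw [hG.integral_smul_gradient_eq hΩ_open hθ_smooth hθ_cpt hθ_supp, neg_smul_neg,
    ← measureReal_def, ← measureReal_restrict_apply_univ]
  exact lintegral_enorm_sub_weightedAverage_rpow_le
    (hθ_smooth.continuous.integrable_of_hasCompactSupport hθ_cpt).restrict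
    (hG.2.1.integrable_smul_left_of_tsupport_subset hθ_smooth.continuous hθ_cpt hθ_supp)
    hG.2.1.aestronglyMeasurable hθ_bdd hθ_int hp1

/-- If `Ω` is nonempty open of finite measure, `1 ≤ p < ∞`, `u ∈ W^{1,p}(Ω)`
with weak gradient `G`, and `θ ∈ C_c^1(Ω)` with `∫_Ω θ ≠ 0`, then with the affine function
`g_θ` of constant gradient `b_θ = −(∫_Ω θ)⁻¹ ∫_Ω u(y) ∇θ(y) dy` one has
`∫_Ω |∇(u − g_θ)|^p ≤ (|Ω|^{p−1} ‖θ‖_∞^p / |∫_Ω θ|^p) ∫∫ |G(y) − G(x)|^p dx dy`. -/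
theorem statement13 (N : ℕ) (Ω : Set (EuclideanSpace ℝ (Fin N)))
    (hΩ_open : IsOpen Ω) (hΩ_ne : Ω.Nonempty) (hΩ_fin : volume Ω < ⊤)
    (p : ℝ) (hp1 : 1 ≤ p)
    (u : EuclideanSpace ℝ (Fin N) → ℝ)
    (G : EuclideanSpace ℝ (Fin N) → EuclideanSpace ℝ (Fin N))
    (hu : MemLp u (ENNReal.ofReal p) (volume.restrict Ω))
    (hG : HasWeakGradientOn u G Ω)
    (hGp : MemLp G (ENNReal.ofReal p) (volume.restrict Ω))
    (θ : EuclideanSpace ℝ (Fin N) → ℝ)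
    (hθ_smooth : ContDiff ℝ 1 θ) (hθ_cpt : HasCompactSupport θ) (hθ_supp : tsupport θ ⊆ Ω)
    (hθ_int : ∫ z in Ω, θ z ≠ 0) :
    ∫⁻ x in Ω,
        (‖G x - (-(∫ z in Ω, θ z)⁻¹) • (∫ y in Ω, u y • gradient θ y)‖₊ : ℝ≥0∞) ^ p
      ≤ ENNReal.ofReal
          ((volume Ω).toReal ^ (p - 1) * (⨆ x, |θ x|) ^ p / |∫ z in Ω, θ z| ^ p) *
        ∫⁻ z, (‖G z.2 - G z.1‖₊ : ℝ≥0∞) ^ p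
          ∂((volume.restrict Ω).prod (volume.restrict Ω)) :=
  statement13_general N Ω hΩ_open hΩ_fin p hp1 u G hG θ hθ_smooth hθ_cpt hθ_supp hθ_int
end

section
/- Let Ω ⊆ ℝ^N be nonempty open with finite measure and u ∈ L^1_loc(Ω). Suppose that for some fixed function v ∈ L^1_loc(Ω × Ω) and for every ψ ∈ C_c^1(Ω × Ω) one has ∫_Ω u(x) ∂*_{1,i}(ψ)(x) dx = −∫_{Ω×Ω} v(x,y) ψ(x,y) dx dy, where ∂*_{1,i}(ψ)(x) := ∫_Ω ∂/∂x_i [ψ(y,x) − ψ(x,y)] dy. Then for every θ ∈ C_c^1(Ω) with ∫_Ω θ ≠ 0, u has weak i-th partial derivative given a.e. by ∂_i u(x) = −(∫_Ω θ)^{−1} ∫_Ω [u(y) ∂_i θ(y) + v(x,y) θ(y)] dy. -/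
open MeasureTheory Set

/-!
Testing the nonlocal identity against the tensor product `ψ(x, y) = φ(x) θ(y)` gives
`∂*_{1,i} ψ = (∫ φ) ∂_i θ - (∫ θ) ∂_i φ`, so the identity reads
`(∫ φ) ∫ u ∂_i θ - (∫ θ) ∫ u ∂_i φ = -∫∫ v(x, y) φ(x) θ(y)`.
Dividing by `∫ θ` and applying Fubini to the right-hand side expresses `∫ u ∂_i φ` as
`-∫ w φ` for the stated `w`.
-/

theorem MeasureTheory.LocallyIntegrableOn.integrable_mul_of_tsupport_subset {X : Type*}
    [TopologicalSpace X] [T2Space X] [MeasurableSpace X] [OpensMeasurableSpace X]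
    {μ : Measure X} {s : Set X} {f g : X → ℝ} (hf : LocallyIntegrableOn f s μ) (hg : Continuous g)
    (hgc : HasCompactSupport g) (hgs : tsupport g ⊆ s) :
    Integrable (fun x => f x * g x) μ := by
  have hK : IntegrableOn (fun x => f x * g x) (tsupport g) μ :=
    (hf.integrableOn_compact_subset hgs hgc).mul_continuousOn hg.continuousOn hgc
  exact (integrableOn_iff_integrable_of_support_subset
    ((Function.support_mul_subset_right f g).trans (subset_tsupport g))).mp hK

variable {E : Type*} [NormedAddCommGroup E] [NormedSpace ℝ E]

theorem fderiv_mul_sub_mul_swap_apply {φ θ : E → ℝ} (hφ : Differentiable ℝ φ)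
    (hθ : Differentiable ℝ θ) (x y e : E) :
    fderiv ℝ (fun x' => φ y * θ x' - φ x' * θ y) x e
      = φ y * fderiv ℝ θ x e - θ y * fderiv ℝ φ x e := by
  rw [fderiv_fun_sub ((hθ x).const_mul (φ y)) ((hφ x).mul_const (θ y)),
    fderiv_const_mul (hθ x) (φ y), fderiv_mul_const (hφ x) (θ y)]
  simp

structure IsC1TestFunction (s : Set E) (f : E → ℝ) : Prop where
  contDiff : ContDiff ℝ 1 f
  hasCompactSupport : HasCompactSupport f
  tsupport_subset : tsupport f ⊆ s

namespace IsC1TestFunction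

variable {s : Set E} {f : E → ℝ}

theorem differentiable (hf : IsC1TestFunction s f) : Differentiable ℝ f :=
  hf.contDiff.differentiable one_ne_zero

theorem mul_prod {t : Set E} {g : E → ℝ} (hf : IsC1TestFunction s f)
    (hg : IsC1TestFunction t g) : IsC1TestFunction (s ×ˢ t) (fun p : E × E => f p.1 * g p.2) := by
  have hsupp : tsupport (fun p : E × E => f p.1 * g p.2) ⊆ tsupport f ×ˢ tsupport g := by
    refine closure_minimal (fun p hp => ?_) ((isClosed_tsupport f).prod (isClosed_tsupport g))
    rw [Function.mem_support, mul_ne_zero_iff] at hp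
    exact ⟨subset_tsupport f hp.1, subset_tsupport g hp.2⟩
  exact ⟨(hf.contDiff.comp contDiff_fst).mul (hg.contDiff.comp contDiff_snd),
    (hf.hasCompactSupport.prod hg.hasCompactSupport).of_isClosed_subset (isClosed_tsupport _) hsupp,
    hsupp.trans (prod_mono hf.tsupport_subset hg.tsupport_subset)⟩

variable [MeasurableSpace E] [OpensMeasurableSpace E] {μ : Measure E}

theorem integrable [IsFiniteMeasureOnCompacts μ] (hf : IsC1TestFunction s f) : Integrable f μ :=
  hf.contDiff.continuous.integrable_of_hasCompactSupport hf.hasCompactSupport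

theorem integrable_mul_fderiv_apply {u : E → ℝ} (hf : IsC1TestFunction s f)
    (hu : LocallyIntegrableOn u s μ) (e : E) :
    Integrable (fun x => u x * fderiv ℝ f x e) μ :=
  hu.integrable_mul_of_tsupport_subset
    ((hf.contDiff.continuous_fderiv one_ne_zero).clm_apply continuous_const)
    (hf.hasCompactSupport.fderiv_apply ℝ e)
    ((tsupport_fderiv_apply_subset ℝ e).trans hf.tsupport_subset)

end IsC1TestFunction

variable [MeasurableSpace E] (μ : Measure E)

def HasWeakPartialDeriv (s : Set E) (e : E) (u w : E → ℝ) : Prop :=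
  ∀ φ : E → ℝ, IsC1TestFunction s φ →
    ∫ x in s, u x * fderiv ℝ φ x e ∂μ = - ∫ x in s, w x * φ x ∂μ

/-- The weak nonlocal partial derivative for the constant weight `1`: the left-hand side is
`∫_s u ∂*_e ψ` with `∂*_e ψ (x) = ∫_s ∂_e [ψ(y, x) - ψ(x, y)] dy`. -/
def HasWeakNonlocalPartialDeriv (s : Set E) (e : E) (u : E → ℝ) (v : E × E → ℝ) : Prop :=
  ∀ ψ : E × E → ℝ, IsC1TestFunction (s ×ˢ s) ψ →
    ∫ x in s, u x * (∫ y in s, fderiv ℝ (fun x' => ψ (y, x') - ψ (x', y)) x e ∂μ) ∂μ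
      = - ∫ z, v z * ψ z ∂((μ.restrict s).prod (μ.restrict s))

variable {μ} [OpensMeasurableSpace E] {s : Set E} {φ θ : E → ℝ}

theorem integral_fderiv_mul_sub_mul_swap_apply [IsFiniteMeasureOnCompacts μ]
    (hφ : IsC1TestFunction s φ) (hθ : IsC1TestFunction s θ) (x e : E) :
    ∫ y in s, fderiv ℝ (fun x' => φ y * θ x' - φ x' * θ y) x e ∂μ
      = (∫ y in s, φ y ∂μ) * fderiv ℝ θ x e - (∫ y in s, θ y ∂μ) * fderiv ℝ φ x e := by
  simp_rw [fderiv_mul_sub_mul_swap_apply hφ.differentiable hθ.differentiable]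
  rw [integral_sub (hφ.integrable.restrict.mul_const _) (hθ.integrable.restrict.mul_const _),
    integral_mul_const, integral_mul_const]

variable [SecondCountableTopology E] [SFinite μ]

theorem integrable_mul_tensor {v : E × E → ℝ} (hv : LocallyIntegrableOn v (s ×ˢ s) (μ.prod μ))
    (hφ : IsC1TestFunction s φ) (hθ : IsC1TestFunction s θ) :
    Integrable (fun z => v z * (φ z.1 * θ z.2)) ((μ.restrict s).prod (μ.restrict s)) := by
  have hψ := hφ.mul_prod hθ
  rw [Measure.prod_restrict]
  exact (hv.integrable_mul_of_tsupport_subset hψ.contDiff.continuous hψ.hasCompactSupport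
    hψ.tsupport_subset).restrict

namespace HasWeakNonlocalPartialDeriv

variable {e : E} {u : E → ℝ} {v : E × E → ℝ}

theorem apply_tensor [IsFiniteMeasureOnCompacts μ] (h : HasWeakNonlocalPartialDeriv μ s e u v)
    (hu : LocallyIntegrableOn u s μ) (hv : LocallyIntegrableOn v (s ×ˢ s) (μ.prod μ))
    (hφ : IsC1TestFunction s φ) (hθ : IsC1TestFunction s θ) :
    (∫ y in s, φ y ∂μ) * (∫ x in s, u x * fderiv ℝ θ x e ∂μ)
      - (∫ y in s, θ y ∂μ) * (∫ x in s, u x * fderiv ℝ φ x e ∂μ)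
      = - ∫ x in s, ∫ y in s, v (x, y) * (φ x * θ y) ∂μ ∂μ := by
  have h := h _ (hφ.mul_prod hθ)
  simp only [integral_fderiv_mul_sub_mul_swap_apply hφ hθ] at h
  rw [← integral_prod _ (integrable_mul_tensor hv hφ hθ), ← h,
    ← integral_const_mul, ← integral_const_mul,
    ← integral_sub ((hθ.integrable_mul_fderiv_apply hu e).restrict.const_mul _)
      ((hφ.integrable_mul_fderiv_apply hu e).restrict.const_mul _)]
  congr 1 with x
  ring

end HasWeakNonlocalPartialDeriv

theorem integral_integral_add_mul_tensor [IsFiniteMeasureOnCompacts μ] {g : E → ℝ}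
    {v : E × E → ℝ} (hg : Integrable g (μ.restrict s))
    (hv : LocallyIntegrableOn v (s ×ˢ s) (μ.prod μ))
    (hφ : IsC1TestFunction s φ) (hθ : IsC1TestFunction s θ) :
    ∫ x in s, (∫ y in s, (g y + v (x, y) * θ y) ∂μ) * φ x ∂μ
      = (∫ y in s, g y ∂μ) * (∫ x in s, φ x ∂μ)
        + ∫ x in s, ∫ y in s, v (x, y) * (φ x * θ y) ∂μ ∂μ := by
  have hvψ := integrable_mul_tensor hv hφ hθ
  have hsection : ∀ᵐ x ∂μ.restrict s, (∫ y in s, (g y + v (x, y) * θ y) ∂μ) * φ x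
      = (∫ y in s, g y ∂μ) * φ x + ∫ y in s, v (x, y) * (φ x * θ y) ∂μ := by
    filter_upwards [hvψ.prod_right_ae] with x hx
    rw [← integral_mul_const, ← integral_mul_const, ← integral_add (hg.mul_const _) hx]
    congr 1 with y
    ring
  rw [integral_congr_ae hsection, integral_add (hφ.integrable.restrict.const_mul _)
    hvψ.integral_prod_left, integral_const_mul]

theorem HasWeakNonlocalPartialDeriv.hasWeakPartialDeriv [IsFiniteMeasureOnCompacts μ] {e : E}
    {u : E → ℝ} {v : E × E → ℝ} (h : HasWeakNonlocalPartialDeriv μ s e u v)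
    (hu : LocallyIntegrableOn u s μ) (hv : LocallyIntegrableOn v (s ×ˢ s) (μ.prod μ))
    (hθ : IsC1TestFunction s θ) (hθ_int : ∫ z in s, θ z ∂μ ≠ 0) :
    HasWeakPartialDeriv μ s e u fun x =>
      -(∫ z in s, θ z ∂μ)⁻¹ * ∫ y in s, (u y * fderiv ℝ θ y e + v (x, y) * θ y) ∂μ := by
  intro φ hφ
  have key := h.apply_tensor hu hv hφ hθ
  simp only [mul_assoc (-(∫ z in s, θ z ∂μ)⁻¹)]
  rw [integral_const_mul, integral_integral_add_mul_tensor
    (hθ.integrable_mul_fderiv_apply hu e).restrict hv hφ hθ, neg_mul, neg_neg,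
    eq_inv_mul_iff_mul_eq₀ hθ_int]
  linarith

theorem statement16_general (N : ℕ) (Ω : Set (EuclideanSpace ℝ (Fin N)))
    (i : Fin N)
    (u : EuclideanSpace ℝ (Fin N) → ℝ)
    (v : EuclideanSpace ℝ (Fin N) × EuclideanSpace ℝ (Fin N) → ℝ)
    (hu : LocallyIntegrableOn u Ω)
    (hv : LocallyIntegrableOn v (Ω ×ˢ Ω))
    (hweak : ∀ ψ : EuclideanSpace ℝ (Fin N) × EuclideanSpace ℝ (Fin N) → ℝ,
      ContDiff ℝ 1 ψ → HasCompactSupport ψ → tsupport ψ ⊆ Ω ×ˢ Ω →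
      ∫ x in Ω, u x *
          (∫ y in Ω, fderiv ℝ (fun x' => ψ (y, x') - ψ (x', y)) x
            (EuclideanSpace.single i (1:ℝ)))
        = - ∫ z, v z * ψ z ∂((volume.restrict Ω).prod (volume.restrict Ω))) :
    ∀ θ : EuclideanSpace ℝ (Fin N) → ℝ, ContDiff ℝ 1 θ → HasCompactSupport θ →
      tsupport θ ⊆ Ω → (∫ z in Ω, θ z) ≠ 0 →
      ∀ φ : EuclideanSpace ℝ (Fin N) → ℝ, ContDiff ℝ 1 φ → HasCompactSupport φ →
        tsupport φ ⊆ Ω →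
        ∫ x in Ω, u x * fderiv ℝ φ x (EuclideanSpace.single i (1:ℝ))
          = - ∫ x in Ω,
              (-(∫ z in Ω, θ z)⁻¹ *
                ∫ y in Ω,
                  (u y * fderiv ℝ θ y (EuclideanSpace.single i (1:ℝ)) + v (x, y) * θ y))
              * φ x := by
  intro θ hθ hθc hθs hθ_int φ hφ hφc hφs
  have h : HasWeakNonlocalPartialDeriv volume Ω (EuclideanSpace.single i 1) u v :=
    fun ψ hψ => hweak ψ hψ.contDiff hψ.hasCompactSupport hψ.tsupport_subset
  exact h.hasWeakPartialDeriv hu hv ⟨hθ, hθc, hθs⟩ hθ_int φ ⟨hφ, hφc, hφs⟩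

/-- Let `Ω ⊆ ℝ^N` be nonempty open of finite measure, `u ∈ L^1_loc(Ω)`, and
`v ∈ L^1_loc(Ω × Ω)` a weak `i`-th nonlocal partial derivative of `u` for the constant
weight `1`, i.e. `∫_Ω u(x) ∂*_{1,i}(ψ)(x) dx = −∫_{Ω×Ω} v ψ` for all `ψ ∈ C_c^1(Ω × Ω)`,
where `∂*_{1,i}(ψ)(x) = ∫_Ω ∂_{x_i}[ψ(y,x) − ψ(x,y)] dy`. Then for every `θ ∈ C_c^1(Ω)`
with `∫_Ω θ ≠ 0`, the function
`x ↦ −(∫_Ω θ)⁻¹ ∫_Ω [u(y) ∂_i θ(y) + v(x,y) θ(y)] dy` is a weak `i`-th partial derivative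
of `u` on `Ω`. -/
theorem statement16 (N : ℕ) (Ω : Set (EuclideanSpace ℝ (Fin N)))
    (hΩ_open : IsOpen Ω) (hΩ_ne : Ω.Nonempty) (hΩ_fin : volume Ω < ⊤)
    (i : Fin N)
    (u : EuclideanSpace ℝ (Fin N) → ℝ)
    (v : EuclideanSpace ℝ (Fin N) × EuclideanSpace ℝ (Fin N) → ℝ)
    (hu : LocallyIntegrableOn u Ω)
    (hv : LocallyIntegrableOn v (Ω ×ˢ Ω))
    (hweak : ∀ ψ : EuclideanSpace ℝ (Fin N) × EuclideanSpace ℝ (Fin N) → ℝ,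
      ContDiff ℝ 1 ψ → HasCompactSupport ψ → tsupport ψ ⊆ Ω ×ˢ Ω →
      ∫ x in Ω, u x *
          (∫ y in Ω, fderiv ℝ (fun x' => ψ (y, x') - ψ (x', y)) x
            (EuclideanSpace.single i (1:ℝ)))
        = - ∫ z, v z * ψ z ∂((volume.restrict Ω).prod (volume.restrict Ω))) :
    ∀ θ : EuclideanSpace ℝ (Fin N) → ℝ, ContDiff ℝ 1 θ → HasCompactSupport θ →
      tsupport θ ⊆ Ω → (∫ z in Ω, θ z) ≠ 0 →
      ∀ φ : EuclideanSpace ℝ (Fin N) → ℝ, ContDiff ℝ 1 φ → HasCompactSupport φ →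
        tsupport φ ⊆ Ω →
        ∫ x in Ω, u x * fderiv ℝ φ x (EuclideanSpace.single i (1:ℝ))
          = - ∫ x in Ω,
              (-(∫ z in Ω, θ z)⁻¹ *
                ∫ y in Ω,
                  (u y * fderiv ℝ θ y (EuclideanSpace.single i (1:ℝ)) + v (x, y) * θ y))
              * φ x :=
  statement16_general N Ω i u v hu hv hweak
end

section
/- Let Ω ⊆ ℝ^N be nonempty open, ω : Ω × Ω → [0,∞) continuous and symmetric, and u ∈ L^1_loc(Ω) weakly differentiable in the i-th direction with weak derivative ∂_i u ∈ L^1_loc(Ω). Then for every ψ ∈ C_c^1(Ω × Ω), ∫_Ω u(x) ∂*_{ω,i}(ψ)(x) dx = −∫_{Ω×Ω} ω(x,y)(∂_i u(y) − ∂_i u(x)) ψ(x,y) dx dy, where ∂*_{ω,i}(ψ)(x) := ∫_Ω ∂/∂x_i [ω(x,y)(ψ(y,x) − ψ(x,y))] dy. -/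
open MeasureTheory Set

/-!
With `a(x, y) = ω(x, y) ψ(x, y)`, symmetry of `ω` gives `ω(x, y) (ψ(y, x) - ψ(x, y)) =
a(y, x) - a(x, y)`, a `C¹` function with compact support in `Ω × Ω`. Differentiating under the
integral sign, `∂*_{ω,i}(ψ)` is the `i`-th partial derivative of the test function
`x ↦ ∫_Ω (a(y, x) - a(x, y)) dy`, so the weak derivative identity turns the left-hand side into
`-∫∫ d(x) (a(y, x) - a(x, y))`. Exchanging `x` and `y` in the first half of this integral
(Fubini) gives `-∫∫ (d(y) - d(x)) a(x, y)`.
-/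

theorem ContDiffOn.contDiff_mul_of_tsupport_subset {𝕜 E : Type*} [NontriviallyNormedField 𝕜]
    [NormedAddCommGroup E] [NormedSpace 𝕜 E] {n : WithTop ℕ∞} {U : Set E} {f φ : E → 𝕜}
    (hU : IsOpen U) (hf : ContDiffOn 𝕜 n f U) (hφ : ContDiff 𝕜 n φ) (hφU : tsupport φ ⊆ U) :
    ContDiff 𝕜 n (fun x => f x * φ x) := by
  refine contDiff_iff_contDiffAt.2 fun x => ?_
  by_cases hx : x ∈ U
  · exact (hf.mul hφ.contDiffOn).contDiffAt (hU.mem_nhds hx)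
  · have hφx : φ =ᶠ[nhds x] 0 := notMem_tsupport_iff_eventuallyEq.1 fun h => hx (hφU h)
    refine contDiffAt_const (c := (0 : 𝕜)).congr_of_eventuallyEq ?_
    filter_upwards [hφx] with y hy
    simp [hy]

theorem tsupport_comp_swap_subset {X Y α : Type*} [TopologicalSpace X] [TopologicalSpace Y]
    [Zero α] {f : X × Y → α} {s : Set X} {t : Set Y} (hf : tsupport f ⊆ s ×ˢ t) :
    tsupport (f ∘ Prod.swap) ⊆ t ×ˢ s := by
  rw [← preimage_swap_prod]
  exact (tsupport_comp_eq_preimage f (Homeomorph.prodComm Y X)).trans_subset (preimage_mono hf)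

theorem mul_sub_swap_eq_of_support_subset {X : Type*} {s : Set X} {ω : X → X → ℝ}
    (hω : ∀ x ∈ s, ∀ y ∈ s, ω x y = ω y x) {ψ : X × X → ℝ} (hψ : Function.support ψ ⊆ s ×ˢ s)
    (x y : X) : ω x y * (ψ (y, x) - ψ (x, y)) = ω y x * ψ (y, x) - ω x y * ψ (x, y) := by
  by_cases hxy : (x, y) ∈ s ×ˢ s
  · rw [hω x hxy.1 y hxy.2]
    ring
  · have hyx : (y, x) ∉ s ×ˢ s := fun h => hxy ⟨h.2, h.1⟩
    rw [Function.notMem_support.1 fun h => hxy (hψ h),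
      Function.notMem_support.1 fun h => hyx (hψ h)]
    ring

theorem HasCompactSupport.tsupport_integral_comp_prodMk_left_subset {X Y H : Type*}
    [TopologicalSpace X] [T2Space X] [TopologicalSpace Y] [MeasurableSpace Y] {μ : Measure Y}
    [NormedAddCommGroup H] [NormedSpace ℝ H] {g : X × Y → H} (hgc : HasCompactSupport g) :
    tsupport (fun x => ∫ y, g (x, y) ∂μ) ⊆ Prod.fst '' tsupport g := by
  refine closure_minimal (fun x hx => ?_) (hgc.image continuous_fst).isClosed
  by_contra hx'
  refine hx (integral_eq_zero_of_ae (ae_of_all _ fun y => ?_))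
  exact image_eq_zero_of_notMem_tsupport fun h => hx' ⟨_, h, rfl⟩

theorem HasCompactSupport.integral_comp_prodMk_left {X Y H : Type*}
    [TopologicalSpace X] [T2Space X] [TopologicalSpace Y] [MeasurableSpace Y] {μ : Measure Y}
    [NormedAddCommGroup H] [NormedSpace ℝ H] {g : X × Y → H} (hgc : HasCompactSupport g) :
    HasCompactSupport (fun x => ∫ y, g (x, y) ∂μ) :=
  (hgc.image continuous_fst).of_isClosed_subset (isClosed_tsupport _)
    hgc.tsupport_integral_comp_prodMk_left_subset

section PartialDerivative

variable {E Y H : Type*} [NormedAddCommGroup E] [NormedSpace ℝ E] [NormedAddCommGroup Y]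
  [NormedSpace ℝ Y] [NormedAddCommGroup H] [NormedSpace ℝ H] {g : E × Y → H}

theorem ContDiff.hasFDerivAt_comp_prodMk_left (hg : ContDiff ℝ 1 g) (x : E) (y : Y) :
    HasFDerivAt (fun x' => g (x', y)) ((fderiv ℝ g (x, y)).comp (ContinuousLinearMap.inl ℝ E Y))
      x :=
  (hg.differentiable one_ne_zero (x, y)).hasFDerivAt.comp x (hasFDerivAt_prodMk_left x y)

theorem ContDiff.continuous_fderiv_comp_inl (hg : ContDiff ℝ 1 g) :
    Continuous fun z => (fderiv ℝ g z).comp (ContinuousLinearMap.inl ℝ E Y) :=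
  (hg.continuous_fderiv one_ne_zero).clm_comp continuous_const

theorem HasCompactSupport.fderiv_comp_inl (hgc : HasCompactSupport g) :
    HasCompactSupport fun z => (fderiv ℝ g z).comp (ContinuousLinearMap.inl ℝ E Y) :=
  (hgc.fderiv ℝ).comp_left (g := fun L : E × Y →L[ℝ] H => L.comp (ContinuousLinearMap.inl ℝ E Y))
    (ContinuousLinearMap.zero_comp _)

end PartialDerivative

section ParametricIntegral

variable {E Y H : Type*} [NormedAddCommGroup E] [NormedAddCommGroup Y] [MeasurableSpace Y]
  [OpensMeasurableSpace Y] {μ : Measure Y} [IsFiniteMeasureOnCompacts μ] [NormedAddCommGroup H]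

theorem HasCompactSupport.integrable_comp_prodMk_left {P : E × Y → H} (hPc : HasCompactSupport P)
    (hP : Continuous P) (x : E) : Integrable (fun y => P (x, y)) μ := by
  refine (hP.comp (Continuous.prodMk_right x)).integrable_of_hasCompactSupport ?_
  refine (hPc.image continuous_snd).of_isClosed_subset (isClosed_tsupport _) ?_
  exact (tsupport_comp_subset_preimage P (Continuous.prodMk_right x)).trans
    fun y hy => ⟨(x, y), hy, rfl⟩

theorem HasCompactSupport.exists_integrable_bound_snd {P : E × Y → H}
    (hPc : HasCompactSupport P) (hP : Continuous P) :
    ∃ bound : Y → ℝ, Integrable bound μ ∧ ∀ x y, ‖P (x, y)‖ ≤ bound y := by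
  obtain ⟨C, hC⟩ := hPc.exists_bound_of_continuous hP
  have hB : IsCompact (Prod.snd '' tsupport P) := hPc.image continuous_snd
  refine ⟨(Prod.snd '' tsupport P).indicator fun _ => C,
    (integrable_indicator_iff hB.measurableSet).2 (integrableOn_const hB.measure_ne_top),
    fun x y => ?_⟩
  by_cases hy : y ∈ Prod.snd '' tsupport P
  · rw [indicator_of_mem hy]
    exact hC (x, y)
  · rw [indicator_of_notMem hy, image_eq_zero_of_notMem_tsupport fun h => hy ⟨_, h, rfl⟩,
      norm_zero]

variable [NormedSpace ℝ H]

theorem HasCompactSupport.continuous_integral_comp_prodMk_left {P : E × Y → H}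
    (hPc : HasCompactSupport P) (hP : Continuous P) :
    Continuous (fun x => ∫ y, P (x, y) ∂μ) := by
  obtain ⟨bound, hbound_int, hbound⟩ := hPc.exists_integrable_bound_snd (μ := μ) hP
  exact continuous_of_dominated
    (fun x => (hPc.integrable_comp_prodMk_left hP x).aestronglyMeasurable)
    (fun x => ae_of_all _ (hbound x)) hbound_int
    (ae_of_all _ fun y => hP.comp (continuous_id.prodMk continuous_const))

variable [NormedSpace ℝ E] [NormedSpace ℝ Y] {g : E × Y → H}

theorem HasCompactSupport.hasFDerivAt_integral_comp_prodMk_left (hgc : HasCompactSupport g)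
    (hg : ContDiff ℝ 1 g) (x₀ : E) :
    HasFDerivAt (fun x => ∫ y, g (x, y) ∂μ)
      (∫ y, (fderiv ℝ g (x₀, y)).comp (ContinuousLinearMap.inl ℝ E Y) ∂μ) x₀ := by
  have hP := hg.continuous_fderiv_comp_inl
  have hPc := hgc.fderiv_comp_inl
  obtain ⟨bound, hbound_int, hbound⟩ := hPc.exists_integrable_bound_snd (μ := μ) hP
  exact hasFDerivAt_integral_of_dominated_of_fderiv_le Filter.univ_mem
    (Filter.Eventually.of_forall fun x =>
      (hgc.integrable_comp_prodMk_left hg.continuous x).aestronglyMeasurable)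
    (hgc.integrable_comp_prodMk_left hg.continuous x₀)
    (hPc.integrable_comp_prodMk_left hP x₀).aestronglyMeasurable
    (ae_of_all _ fun y x _ => hbound x y) hbound_int
    (ae_of_all _ fun y x _ => hg.hasFDerivAt_comp_prodMk_left x y)

theorem HasCompactSupport.contDiff_integral_comp_prodMk_left (hgc : HasCompactSupport g)
    (hg : ContDiff ℝ 1 g) : ContDiff ℝ 1 (fun x => ∫ y, g (x, y) ∂μ) := by
  refine contDiff_one_iff_fderiv.2
    ⟨fun x => (hgc.hasFDerivAt_integral_comp_prodMk_left (μ := μ) hg x).differentiableAt, ?_⟩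
  rw [funext fun x => (hgc.hasFDerivAt_integral_comp_prodMk_left (μ := μ) hg x).fderiv]
  exact hgc.fderiv_comp_inl.continuous_integral_comp_prodMk_left hg.continuous_fderiv_comp_inl

theorem HasCompactSupport.fderiv_integral_comp_prodMk_left_apply (hgc : HasCompactSupport g)
    (hg : ContDiff ℝ 1 g) (x v : E) :
    fderiv ℝ (fun x => ∫ y, g (x, y) ∂μ) x v = ∫ y, fderiv ℝ (fun x' => g (x', y)) x v ∂μ := by
  rw [(hgc.hasFDerivAt_integral_comp_prodMk_left hg x).fderiv,
    ContinuousLinearMap.integral_apply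
      (hgc.fderiv_comp_inl.integrable_comp_prodMk_left hg.continuous_fderiv_comp_inl x)]
  simp only [(hg.hasFDerivAt_comp_prodMk_left x _).fderiv]

end ParametricIntegral

namespace MeasureTheory

theorem LocallyIntegrableOn.integrable_comp_fst_mul {X Y : Type*}
    [TopologicalSpace X] [T2Space X] [MeasurableSpace X] [OpensMeasurableSpace X]
    [TopologicalSpace Y] [T2Space Y] [MeasurableSpace Y] [OpensMeasurableSpace Y]
    [SecondCountableTopologyEither X Y] {μ : Measure X} {ν : Measure Y} [SFinite μ] [SFinite ν]
    [IsFiniteMeasureOnCompacts ν] {s : Set X} {d : X → ℝ} (hd : LocallyIntegrableOn d s μ)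
    {q : X × Y → ℝ} (hqc : HasCompactSupport q) (hq : Continuous q)
    (hqs : tsupport q ⊆ Prod.fst ⁻¹' s) :
    Integrable (fun z => d z.1 * q z) (μ.prod ν) := by
  set A := Prod.fst '' tsupport q
  set B := Prod.snd '' tsupport q
  have hB : IsCompact B := hqc.image continuous_snd
  have hdA : IntegrableOn d A μ :=
    hd.integrableOn_compact_subset (by rintro _ ⟨z, hz, rfl⟩; exact hqs hz)
      (hqc.image continuous_fst)
  have : IsFiniteMeasure (ν.restrict B) := isFiniteMeasure_restrict.2 hB.measure_ne_top
  have hdAB : IntegrableOn (fun z => d z.1) (A ×ˢ B) (μ.prod ν) := by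
    rw [IntegrableOn, ← Measure.prod_restrict]
    exact hdA.comp_fst _
  obtain ⟨C, hC⟩ := hqc.exists_bound_of_continuous hq
  refine IntegrableOn.integrable_of_forall_notMem_eq_zero
    (hdAB.mul_bdd hq.aestronglyMeasurable (ae_of_all _ hC)) fun z hz => ?_
  rw [image_eq_zero_of_notMem_tsupport fun h => hz ⟨⟨z, h, rfl⟩, ⟨z, h, rfl⟩⟩, mul_zero]

theorem integral_fst_mul_sub_swap {X : Type*} [MeasurableSpace X] {μ : Measure X} [SFinite μ]
    {d : X → ℝ} {a : X × X → ℝ} (h₁ : Integrable (fun z => d z.1 * a z) (μ.prod μ))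
    (h₂ : Integrable (fun z => d z.2 * a z) (μ.prod μ)) :
    ∫ z, d z.1 * (a z.swap - a z) ∂μ.prod μ = ∫ z, (d z.2 - d z.1) * a z ∂μ.prod μ := by
  have hswap : ∫ z, d z.1 * a z.swap ∂μ.prod μ = ∫ z, d z.2 * a z ∂μ.prod μ :=
    integral_prod_swap fun z => d z.2 * a z
  simp only [mul_sub, sub_mul]
  rw [integral_sub (h₂.swap : Integrable (fun z => d z.1 * a z.swap) _) h₁, integral_sub h₂ h₁,
    hswap]

theorem LocallyIntegrableOn.setIntegral_mul_setIntegral_sub_swap {X : Type*}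
    [TopologicalSpace X] [T2Space X] [MeasurableSpace X] [OpensMeasurableSpace X]
    [SecondCountableTopology X] {μ : Measure X} [SFinite μ] [IsFiniteMeasureOnCompacts μ]
    {s : Set X} {d : X → ℝ} (hd : LocallyIntegrableOn d s μ) {a : X × X → ℝ}
    (hac : HasCompactSupport a) (ha : Continuous a) (has : tsupport a ⊆ s ×ˢ s) :
    ∫ x in s, d x * ∫ y in s, (a (x, y).swap - a (x, y)) ∂μ ∂μ
      = ∫ z, (d z.2 - d z.1) * a z ∂(μ.restrict s).prod (μ.restrict s) := by
  have hds : LocallyIntegrableOn d s (μ.restrict s) := hd.mono_measure Measure.restrict_le_self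
  have h₁ := hds.integrable_comp_fst_mul (ν := μ.restrict s) hac ha
    (has.trans (prod_subset_preimage_fst s s))
  have h₂ : Integrable (fun z => d z.1 * a z.swap) ((μ.restrict s).prod (μ.restrict s)) :=
    hds.integrable_comp_fst_mul (hac.comp_homeomorph (Homeomorph.prodComm X X))
      (ha.comp continuous_swap)
      ((tsupport_comp_swap_subset has).trans (prod_subset_preimage_fst s s))
  rw [← integral_fst_mul_sub_swap h₁ h₂.swap,
    integral_prod _ (by simp only [mul_sub]; exact h₂.sub h₁)]
  simp only [integral_const_mul]

end MeasureTheory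

theorem statement17_general (N : ℕ) (Ω : Set (EuclideanSpace ℝ (Fin N)))
    (hΩ_open : IsOpen Ω)
    (ω : EuclideanSpace ℝ (Fin N) → EuclideanSpace ℝ (Fin N) → ℝ)
    (hω_smooth : ContDiffOn ℝ 1 (fun z : EuclideanSpace ℝ (Fin N) × EuclideanSpace ℝ (Fin N)
      => ω z.1 z.2) (Ω ×ˢ Ω))
    (hω_symm : ∀ x ∈ Ω, ∀ y ∈ Ω, ω x y = ω y x)
    (i : Fin N)
    (u : EuclideanSpace ℝ (Fin N) → ℝ) (d : EuclideanSpace ℝ (Fin N) → ℝ)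
    (hd : LocallyIntegrableOn d Ω)
    (hweak : ∀ φ : EuclideanSpace ℝ (Fin N) → ℝ, ContDiff ℝ 1 φ → HasCompactSupport φ →
      tsupport φ ⊆ Ω →
      ∫ x in Ω, u x * fderiv ℝ φ x (EuclideanSpace.single i (1:ℝ))
        = - ∫ x in Ω, d x * φ x) :
    ∀ ψ : EuclideanSpace ℝ (Fin N) × EuclideanSpace ℝ (Fin N) → ℝ,
      ContDiff ℝ 1 ψ → HasCompactSupport ψ → tsupport ψ ⊆ Ω ×ˢ Ω →
      ∫ x in Ω, u x *
          (∫ y in Ω, fderiv ℝ (fun x' => ω x' y * (ψ (y, x') - ψ (x', y))) x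
            (EuclideanSpace.single i (1:ℝ)))
        = - ∫ z, ω z.1 z.2 * (d z.2 - d z.1) * ψ z
            ∂((volume.restrict Ω).prod (volume.restrict Ω)) := by
  intro ψ hψ hψc hψΩ
  set a := fun z : EuclideanSpace ℝ (Fin N) × EuclideanSpace ℝ (Fin N) => ω z.1 z.2 * ψ z
  have ha : ContDiff ℝ 1 a :=
    hω_smooth.contDiff_mul_of_tsupport_subset (hΩ_open.prod hΩ_open) hψ hψΩ
  have hac : HasCompactSupport a := hψc.mul_left
  have haΩ : tsupport a ⊆ Ω ×ˢ Ω := tsupport_mul_subset_right.trans hψΩ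
  have hb : ContDiff ℝ 1 fun z => a z.swap - a z :=
    (ha.comp (contDiff_snd.prodMk contDiff_fst)).sub ha
  have hbc : HasCompactSupport fun z => a z.swap - a z :=
    (hac.comp_homeomorph (Homeomorph.prodComm _ _)).sub hac
  have hbΩ : tsupport (fun z => a z.swap - a z) ⊆ Ω ×ˢ Ω :=
    (tsupport_sub _ _).trans (union_subset (tsupport_comp_swap_subset haΩ) haΩ)
  have hsymm : ∀ x y, ω x y * (ψ (y, x) - ψ (x, y)) = a (x, y).swap - a (x, y) :=
    mul_sub_swap_eq_of_support_subset hω_symm ((subset_tsupport ψ).trans hψΩ)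
  calc _ = ∫ x in Ω, u x * fderiv ℝ (fun x => ∫ y in Ω, (a (x, y).swap - a (x, y))) x
        (EuclideanSpace.single i 1) := by
        simp only [hsymm, hbc.fderiv_integral_comp_prodMk_left_apply (μ := volume.restrict Ω) hb]
    _ = -∫ x in Ω, d x * ∫ y in Ω, (a (x, y).swap - a (x, y)) :=
        hweak _ (hbc.contDiff_integral_comp_prodMk_left hb) hbc.integral_comp_prodMk_left
          (hbc.tsupport_integral_comp_prodMk_left_subset.trans
            (image_subset_iff.2 (hbΩ.trans (prod_subset_preimage_fst Ω Ω))))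
    _ = _ := by
        rw [hd.setIntegral_mul_setIntegral_sub_swap hac ha.continuous haΩ]
        congr 2 with z
        ring

/-- Let `Ω ⊆ ℝ^N` be nonempty open, `ω` a `C^1`, nonnegative and symmetric
weight on `Ω × Ω`, and `u ∈ L^1_loc(Ω)` with weak `i`-th partial derivative
`d ∈ L^1_loc(Ω)`. Then for every `ψ ∈ C_c^1(Ω × Ω)`,
`∫_Ω u(x) ∂*_{ω,i}(ψ)(x) dx = −∫_{Ω×Ω} ω(x,y)(d(y) − d(x)) ψ(x,y) dx dy`, where
`∂*_{ω,i}(ψ)(x) = ∫_Ω ∂_{x_i}[ω(x,y)(ψ(y,x) − ψ(x,y))] dy`. -/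
theorem statement17 (N : ℕ) (Ω : Set (EuclideanSpace ℝ (Fin N)))
    (hΩ_open : IsOpen Ω) (hΩ_ne : Ω.Nonempty)
    (ω : EuclideanSpace ℝ (Fin N) → EuclideanSpace ℝ (Fin N) → ℝ)
    (hω_smooth : ContDiffOn ℝ 1 (fun z : EuclideanSpace ℝ (Fin N) × EuclideanSpace ℝ (Fin N)
      => ω z.1 z.2) (Ω ×ˢ Ω))
    (hω_nonneg : ∀ x ∈ Ω, ∀ y ∈ Ω, 0 ≤ ω x y)
    (hω_symm : ∀ x ∈ Ω, ∀ y ∈ Ω, ω x y = ω y x)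
    (i : Fin N)
    (u : EuclideanSpace ℝ (Fin N) → ℝ) (d : EuclideanSpace ℝ (Fin N) → ℝ)
    (hu : LocallyIntegrableOn u Ω) (hd : LocallyIntegrableOn d Ω)
    (hweak : ∀ φ : EuclideanSpace ℝ (Fin N) → ℝ, ContDiff ℝ 1 φ → HasCompactSupport φ →
      tsupport φ ⊆ Ω →
      ∫ x in Ω, u x * fderiv ℝ φ x (EuclideanSpace.single i (1:ℝ))
        = - ∫ x in Ω, d x * φ x) :
    ∀ ψ : EuclideanSpace ℝ (Fin N) × EuclideanSpace ℝ (Fin N) → ℝ,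
      ContDiff ℝ 1 ψ → HasCompactSupport ψ → tsupport ψ ⊆ Ω ×ˢ Ω →
      ∫ x in Ω, u x *
          (∫ y in Ω, fderiv ℝ (fun x' => ω x' y * (ψ (y, x') - ψ (x', y))) x
            (EuclideanSpace.single i (1:ℝ)))
        = - ∫ z, ω z.1 z.2 * (d z.2 - d z.1) * ψ z
            ∂((volume.restrict Ω).prod (volume.restrict Ω)) :=
  statement17_general N Ω hΩ_open ω hω_smooth hω_symm i u d hd hweak
end
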